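/- Let K ≥ 4 be a real number and M, N positive real numbers. Define the sequence (v_n)_{n≥0} by v_0 = M, v_1 = (K − 1)·M − K·N, and v_{n+1} = (K − 2)·v_n − v_{n−1} for n ≥ 1. Then v_n > 0 for all n ≥ 0 if and only if M ≥ ((K − √(K² − 4K))/2)·N. -/
import Mathlib


/-- Untruncated irresolvable-subspace dimensions along Chain B:
`v_0 = M`, `v_1 = (K−1)·M − K·N`, `v_{n+1} = (K−2)·v_n − v_{n−1}`. -/
def vSeq (K M N : ℝ) : ℕ → ℝ
  | 0 => M
  | 1 => (K - 1) * M - K * N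
  | (n + 2) => (K - 2) * vSeq K M N (n + 1) - vSeq K M N n

/-- For `K ≥ 4` and positive reals `M, N`, all terms of the Chain-B
recursion `v_0 = M`, `v_1 = (K−1)M − KN`, `v_{n+1} = (K−2)v_n − v_{n−1}` are
positive iff `M ≥ ((K − √(K² − 4K))/2)·N`. -/
theorem chainB_pos_iff (K M N : ℝ) (hK : 4 ≤ K) (hM : 0 < M) (hN : 0 < N) :
    (∀ n : ℕ, 0 < vSeq K M N n) ↔
      (K - Real.sqrt (K ^ 2 - 4 * K)) / 2 * N ≤ M := by
  set s := Real.sqrt (K ^ 2 - 4 * K) with hs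
  have hK0 : (0:ℝ) < K := by linarith
  have hD : 0 ≤ K ^ 2 - 4 * K := by nlinarith
  have hs2 : s ^ 2 = K ^ 2 - 4 * K := Real.sq_sqrt hD
  have hs0 : 0 ≤ s := Real.sqrt_nonneg _
  have hsK : s < K - 2 := by nlinarith [hs2, hs0]
  set r := (K - 2 - s) / 2 with hrdef
  set μ := (K - 2 + s) / 2 with hμdef
  have hr_pos : 0 < r := by rw [hrdef]; linarith
  have hμ1 : 1 ≤ μ := by rw [hμdef]; linarith
  have hsum : r + μ = K - 2 := by rw [hrdef, hμdef]; ring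
  have hrμ : r * μ = 1 := by
    rw [hrdef, hμdef]; nlinarith [hs2]
  have hr1 : r ≤ 1 := by nlinarith [hr_pos, hμ1, hrμ]
  set w0 := vSeq K M N 1 - r * M with hw0def
  have hv0 : vSeq K M N 0 = M := rfl
  have hv1 : vSeq K M N 1 = (K - 1) * M - K * N := rfl
  have key : ∀ n : ℕ, vSeq K M N (n + 1) = r * vSeq K M N n + μ ^ n * w0 := by
    intro n
    induction n with
    | zero => simp [hw0def, hv0]
    | succ n ih =>
      have h2 : vSeq K M N (n + 2) = (K - 2) * vSeq K M N (n + 1) - vSeq K M N n := rfl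
      rw [h2, pow_succ]
      linear_combination μ * ih + vSeq K M N (n + 1) * hsum - vSeq K M N n * hrμ - vSeq K M N n / 2 * hs2
  -- equivalence of the threshold condition with 0 ≤ w0
  have hKs : 0 < K - s := by linarith
  have hw0eq : w0 = (K + s) / 2 * M - K * N := by
    rw [hw0def, hv1, hrdef]; ring
  have hcond : 0 ≤ w0 ↔ (K - s) / 2 * N ≤ M := by
    rw [hw0eq]
    constructor
    · intro h; nlinarith [hs2, hKs, hK0, h]
    · intro h; nlinarith [hs2, hKs, hK0, h]
  rw [← hcond]
  constructor
  · intro hpos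
    by_contra hneg
    push_neg at hneg
    have hbound : ∀ n : ℕ, vSeq K M N n ≤ M + n * w0 := by
      intro n
      induction n with
      | zero => simp [hv0]
      | succ n ih =>
        have h1 := key n
        have hμn : 1 ≤ μ ^ n := one_le_pow₀ hμ1
        have hμw : μ ^ n * w0 ≤ w0 := by nlinarith [hμn, hneg]
        have hrv : r * vSeq K M N n ≤ vSeq K M N n := by
          nlinarith [hpos n, hr1]
        have : vSeq K M N (n + 1) ≤ vSeq K M N n + w0 := by
          rw [h1]; linarith
        push_cast
        linarith
    obtain ⟨n, hn⟩ := exists_nat_gt (M / (-w0))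
    have hnw : M < n * (-w0) := by
      rwa [div_lt_iff₀ (by linarith)] at hn
    have := hbound n
    have := hpos n
    linarith
  · intro hw0
    intro n
    induction n with
    | zero => simpa [hv0] using hM
    | succ n ih =>
      rw [key n]
      have hμn : 0 < μ ^ n := pow_pos (by linarith) n
      linarith [mul_pos hr_pos ih, mul_nonneg (le_of_lt hμn) hw0]
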